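/- arXiv:2011.12080 — 6 statements merged into one kernel-verified Lean document; each statement's English description precedes it below -/
import Mathlib

section
/- For any binary sequence s of period N, if S(x) = Σ_{i=0}^{N-1} s_i x^i and T(x) = Σ_{i=0}^{N-1} (-1)^{s_i} x^i, then -2·S(2)·T(2^{-1}) ≡ N + Σ_{τ=1}^{N-1} C_s(τ)·2^τ (mod 2^N - 1), where C_s(τ) = Σ_{i=0}^{N-1} (-1)^{s_i + s_{i+τ}} is the autocorrelation (indices mod N) and 2^{-1} denotes the inverse of 2 modulo 2^N - 1. -/
/-!
Modulo `2 ^ N - 1` we have `2 ^ N = 1`, so `2` is invertible and `∑_{i<N} 2 ^ i = 0`. Since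
`(-1) ^ s = 1 - 2 s` for a bit `s`, the geometric sum turns `-2 S(2)` into `T(2)`. In the product
`T(2) T(2⁻¹)` the monomial `2 ^ i 2 ^ (-j)` depends only on `i - j` mod `N`, so collecting terms by
`τ = i - j` gives the cyclic autocorrelations `C_s(τ)`; the term `τ = 0` is `C_s(0) = N`.
-/

open Finset

theorem sum_range_comp_add_mod {M : Type*} [AddCommMonoid M] (N j : ℕ) (f : ℕ → M) :
    ∑ τ ∈ range N, f ((j + τ) % N) = ∑ i ∈ range N, f i := by
  rcases Nat.eq_zero_or_pos N with rfl | hN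
  · simp
  have : NeZero N := ⟨hN.ne'⟩
  rw [← Fin.sum_univ_eq_sum_range, ← Fin.sum_univ_eq_sum_range]
  refine Fintype.sum_equiv (Equiv.addLeft (Fin.ofNat N j)) _ _ fun τ => ?_
  simp [Fin.val_add]

theorem sum_mul_sum_inv_eq_sum_correlation {R : Type*} [CommRing R] {N : ℕ} {x y : R}
    (hxy : x * y = 1) (hx : x ^ N = 1) (a b : ℕ → R) :
    (∑ i ∈ range N, a i * x ^ i) * (∑ j ∈ range N, b j * y ^ j) =
      ∑ τ ∈ range N, (∑ j ∈ range N, b j * a ((j + τ) % N)) * x ^ τ := by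
  have hrotate (j : ℕ) : y ^ j * ∑ i ∈ range N, a i * x ^ i =
      ∑ τ ∈ range N, a ((j + τ) % N) * x ^ τ := by
    rw [← sum_range_comp_add_mod N j, mul_sum]
    refine sum_congr rfl fun τ _ => ?_
    have hyx : y ^ j * x ^ j = 1 := by rw [← mul_pow, mul_comm, hxy, one_pow]
    rw [← pow_eq_pow_mod _ hx, pow_add]
    linear_combination a ((j + τ) % N) * x ^ τ * hyx
  calc (∑ i ∈ range N, a i * x ^ i) * (∑ j ∈ range N, b j * y ^ j)
      = ∑ j ∈ range N, b j * ∑ τ ∈ range N, a ((j + τ) % N) * x ^ τ := by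
        rw [mul_sum]
        refine sum_congr rfl fun j _ => ?_
        rw [← hrotate]
        ring
    _ = ∑ τ ∈ range N, (∑ j ∈ range N, b j * a ((j + τ) % N)) * x ^ τ := by
        simp_rw [mul_sum, sum_mul, mul_assoc]
        exact sum_comm

theorem neg_one_pow_eq_one_sub_two_mul {R : Type*} [CommRing R] {n : ℕ} (hn : n ≤ 1) :
    (-1 : R) ^ n = 1 - 2 * n := by
  interval_cases n <;> norm_num

theorem two_pow_eq_one_mod_mersenne (N : ℕ) : (2 : ZMod (2 ^ N - 1)) ^ N = 1 := by
  have h := ZMod.natCast_self (2 ^ N - 1)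
  rw [Nat.cast_sub Nat.one_le_two_pow, Nat.cast_pow, Nat.cast_ofNat, Nat.cast_one,
    sub_eq_zero] at h
  exact h

theorem two_mul_inv_mod_mersenne {N : ℕ} (hN : 0 < N) :
    (2 : ZMod (2 ^ N - 1)) * 2⁻¹ = 1 :=
  ZMod.mul_inv_of_unit _ (.of_pow_eq_one (two_pow_eq_one_mod_mersenne N) hN.ne')

theorem sum_range_two_pow_mod_mersenne (N : ℕ) :
    ∑ i ∈ range N, (2 : ZMod (2 ^ N - 1)) ^ i = 0 := by
  have h := geom_sum_mul (2 : ZMod (2 ^ N - 1)) N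
  rwa [two_pow_eq_one_mod_mersenne, sub_self, show (2 : ZMod (2 ^ N - 1)) - 1 = 1 by norm_num,
    mul_one] at h

theorem stmt_0_general (N : ℕ) (hN : 0 < N) (s : ℕ → ℕ) (hs : ∀ i, s i ≤ 1) :
    (-2 : ZMod (2 ^ N - 1)) *
        (∑ i ∈ Finset.range N, (s i : ZMod (2 ^ N - 1)) * 2 ^ i) *
        (∑ i ∈ Finset.range N, (-1 : ZMod (2 ^ N - 1)) ^ (s i) * ((2 : ZMod (2 ^ N - 1))⁻¹) ^ i) =
      (N : ZMod (2 ^ N - 1)) +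
        ∑ τ ∈ Finset.Ico 1 N,
          ((∑ i ∈ Finset.range N, (-1 : ℤ) ^ (s i + s ((i + τ) % N)) : ℤ) : ZMod (2 ^ N - 1)) *
            2 ^ τ := by
  have hneg_two_mul : (-2 : ZMod (2 ^ N - 1)) * ∑ i ∈ range N, (s i : ZMod (2 ^ N - 1)) * 2 ^ i =
      ∑ i ∈ range N, (-1 : ZMod (2 ^ N - 1)) ^ s i * 2 ^ i := by
    rw [mul_sum, ← sub_zero (∑ i ∈ range N, (-1 : ZMod (2 ^ N - 1)) ^ s i * 2 ^ i),
      ← sum_range_two_pow_mod_mersenne N, ← sum_sub_distrib]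
    refine sum_congr rfl fun i _ => ?_
    rw [neg_one_pow_eq_one_sub_two_mul (hs i)]
    ring
  rw [hneg_two_mul, sum_mul_sum_inv_eq_sum_correlation (two_mul_inv_mod_mersenne hN)
    (two_pow_eq_one_mod_mersenne N), sum_range_eq_add_Ico _ hN]
  congr 1
  · rw [pow_zero, mul_one, show (N : ZMod (2 ^ N - 1)) = ∑ _j ∈ range N, 1 by simp]
    refine sum_congr rfl fun j hj => ?_
    rw [add_zero, Nat.mod_eq_of_lt (mem_range.mp hj), ← mul_pow, neg_one_mul, neg_neg, one_pow]
  · refine sum_congr rfl fun τ _ => ?_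
    push_cast [pow_add]
    rfl

theorem stmt_0 (N : ℕ) (hN : 0 < N) (s : ℕ → ℕ) (hs : ∀ i, s i ≤ 1)
    (hper : ∀ i, s (i + N) = s i) :
    (-2 : ZMod (2 ^ N - 1)) *
        (∑ i ∈ Finset.range N, (s i : ZMod (2 ^ N - 1)) * 2 ^ i) *
        (∑ i ∈ Finset.range N, (-1 : ZMod (2 ^ N - 1)) ^ (s i) * ((2 : ZMod (2 ^ N - 1))⁻¹) ^ i) =
      (N : ZMod (2 ^ N - 1)) +
        ∑ τ ∈ Finset.Ico 1 N,
          ((∑ i ∈ Finset.range N, (-1 : ℤ) ^ (s i + s ((i + τ) % N)) : ℤ) : ZMod (2 ^ N - 1)) *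
            2 ^ τ :=
  stmt_0_general N hN s hs
end

section
/- For every integer k ≥ 1, 2^{2k} - 4·Σ_{i=0}^{2^k - 2} 2^{(2^k+1)i} ≡ (2^k - 2)^2 (mod 2^{2^k+1} - 1). -/
theorem stmt_2 (k : ℕ) (hk : 1 ≤ k) :
    (2 ^ (2 * k) - 4 * ∑ i ∈ Finset.range (2 ^ k - 1), 2 ^ ((2 ^ k + 1) * i) : ℤ) ≡
      ((2 ^ k - 2) ^ 2 : ℤ) [ZMOD (2 ^ (2 ^ k + 1) - 1)] := by
  set n : ℤ := 2 ^ (2 ^ k + 1) - 1 with hn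
  have h1 : (2 : ℤ) ^ (2 ^ k + 1) ≡ 1 [ZMOD n] :=
    (Int.modEq_iff_dvd.mpr (dvd_refl n)).symm
  have hsum : ∀ m : ℕ, (∑ i ∈ Finset.range m, 2 ^ ((2 ^ k + 1) * i) : ℤ) ≡ (m : ℤ) [ZMOD n] := by
    intro m
    induction m with
    | zero => simp
    | succ m ih =>
        rw [Finset.sum_range_succ]
        push_cast
        refine ih.add ?_
        rw [pow_mul]
        simpa using h1.pow m
  have h2 := ((hsum (2 ^ k - 1)).mul_left 4).symm
  have h3 := (Int.ModEq.refl ((2 : ℤ) ^ (2 * k))).sub h2.symm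
  refine h3.trans ?_
  have hc : ((2 ^ k - 1 : ℕ) : ℤ) = 2 ^ k - 1 := by
    push_cast [Nat.one_le_two_pow]
    ring
  rw [hc, two_mul, pow_add]
  ring_nf
  exact Int.ModEq.refl _
end

section
/- Let p be an odd prime such that p + 2 is also prime, and let c = p(p+2) - 4·(2^{p(p+2)} - 1)/(2^{p+2} - 1) + 1. Then gcd(c, 2^p - 1) = 1. -/
theorem aux_cop (p : ℕ) (hp : p.Prime) (hodd : Odd p) :
    Nat.Coprime (p + 1) (2 ^ p - 1) := by
  by_contra h
  obtain ⟨q, hqp, hq1, hq2⟩ := Nat.Prime.not_coprime_iff_dvd.mp h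
  haveI : Fact q.Prime := ⟨hqp⟩
  have h1le : 1 ≤ 2 ^ p := Nat.one_le_two_pow
  have hodd2 : Odd (2 ^ p - 1) := by
    have he : Even (2 ^ p) := (Nat.even_pow).mpr ⟨even_two, hp.pos.ne'⟩
    exact Nat.Even.sub_odd h1le he odd_one
  have hq2' : q ≠ 2 := by
    rintro rfl
    rw [Nat.odd_iff] at hodd2
    omega
  have h2q : (2 : ZMod q) ^ p = 1 := by
    have h0 : ((2 ^ p - 1 : ℕ) : ZMod q) = 0 := (ZMod.natCast_eq_zero_iff _ _).mpr hq2
    rw [Nat.cast_sub h1le] at h0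
    push_cast at h0
    exact sub_eq_zero.mp h0
  have h2ne : (2 : ZMod q) ≠ 0 := by
    intro h0
    have : ((2 : ℕ) : ZMod q) = 0 := by push_cast; exact h0
    have := (ZMod.natCast_eq_zero_iff _ _).mp this
    exact hq2' ((Nat.prime_dvd_prime_iff_eq hqp Nat.prime_two).mp this)
  have hord : orderOf (2 : ZMod q) = p := by
    have hd : orderOf (2 : ZMod q) ∣ p := orderOf_dvd_of_pow_eq_one h2q
    rcases (hp.eq_one_or_self_of_dvd _ hd) with h1 | h1
    · exfalso
      have h21 : (2 : ZMod q) = 1 := orderOf_eq_one_iff.mp h1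
      have : ((1 : ℕ) : ZMod q) = 0 := by
        push_cast
        linear_combination h21
      have := (ZMod.natCast_eq_zero_iff _ _).mp this
      exact hqp.one_lt.ne' (Nat.dvd_one.mp this)
    · exact h1
  have hdvd : p ∣ q - 1 := by
    have := ZMod.orderOf_dvd_card_sub_one h2ne
    rwa [hord] at this
  have hq_le : q ≤ p + 1 := Nat.le_of_dvd (by omega) hq1
  have h2le : 2 ≤ q := hqp.two_le
  have hple : p ≤ q - 1 := Nat.le_of_dvd (by omega) hdvd
  have hq_eq : q = p + 1 := by omega
  have hqodd : Odd q := hqp.odd_of_ne_two hq2'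
  rw [Nat.odd_iff] at hodd hqodd
  omega

theorem stmt_5 (p : ℕ) (hp : p.Prime) (hodd : Odd p) (hp2 : (p + 2).Prime)
    (c : ℤ) (hc : c = p * (p + 2) - 4 * ((2 ^ (p * (p + 2)) - 1) / (2 ^ (p + 2) - 1)) + 1) :
    Int.gcd c (2 ^ p - 1) = 1 := by
  set M : ℤ := 2 ^ p - 1 with hM
  set a : ℤ := 2 ^ (p + 2) with ha
  set S : ℤ := ((2 : ℤ) ^ (p * (p + 2)) - 1) / (2 ^ (p + 2) - 1) with hSdef
  have hpow : (2 : ℤ) ^ (p * (p + 2)) = a ^ p := by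
    rw [ha, ← pow_mul, mul_comm]
  have h1 : (a - 1) ∣ (2 : ℤ) ^ (p * (p + 2)) - 1 := by
    rw [hpow]
    simpa using sub_dvd_pow_sub_pow a 1 p
  have hS : (a - 1) * S = a ^ p - 1 := by
    rw [hSdef, ← hpow]
    exact Int.mul_ediv_cancel' h1
  have hane : a - 1 ≠ 0 := by
    have : (2 : ℤ) ≤ a := by
      rw [ha]
      calc (2:ℤ) = 2^1 := (pow_one 2).symm
      _ ≤ 2 ^ (p+2) := pow_le_pow_right₀ (by norm_num) (by omega)
    omega
  have hSsum : S = ∑ i ∈ Finset.range p, a ^ i := by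
    apply mul_left_cancel₀ hane
    rw [hS, mul_comm]
    exact (geom_sum_mul a p).symm
  -- M divides 3 * S
  have hMdvd3S : M ∣ 3 * S := by
    have key : M ∣ 3 * S - ((4:ℤ) ^ p - 1) := by
      have h4 : ((4:ℤ) ^ p - 1) = (∑ i ∈ Finset.range p, (4:ℤ) ^ i) * 3 := by
        have := geom_sum_mul (4 : ℤ) p
        norm_num at this ⊢
        linarith
      rw [h4, hSsum, Finset.mul_sum, Finset.sum_mul, ← Finset.sum_sub_distrib]
      apply Finset.dvd_sum
      intro i _
      have heq : 3 * a ^ i - (4:ℤ) ^ i * 3 = 3 * ((4:ℤ) ^ i * (((2:ℤ)^p) ^ i - 1)) := by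
        rw [ha, show (2:ℤ)^(p+2) = 2^p * 4 by rw [pow_add]; norm_num, mul_pow, ← pow_mul,
          mul_comm p i, pow_mul]
        ring
      rw [heq]
      exact Dvd.dvd.mul_left (Dvd.dvd.mul_left
        (by simpa using sub_dvd_pow_sub_pow ((2:ℤ)^p) 1 i) _) 3
    have h4p : M ∣ (4:ℤ) ^ p - 1 := by
      have h42 : (4:ℤ) ^ p = ((2:ℤ)^p) ^ 2 := by
        rw [← pow_mul, mul_comm p 2, pow_mul]; norm_num
      rw [h42, hM]
      simpa using sub_dvd_pow_sub_pow ((2:ℤ)^p) 1 2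
    have := dvd_add key h4p
    simpa using this
  -- 3 is coprime to M
  have hcop3 : IsCoprime (3 : ℤ) M := by
    have : (3 : ℤ) ∣ M - 1 := by
      have hz : ((M - 1 : ℤ) : ZMod 3) = 0 := by
        rw [hM, Int.cast_sub, Int.cast_sub, Int.cast_pow, Int.cast_one,
          show ((2:ℤ) : ZMod 3) = -1 from by decide, hodd.neg_one_pow]
        decide
      exact (ZMod.intCast_zmod_eq_zero_iff_dvd _ _).mp hz
    obtain ⟨k, hk⟩ := this
    exact ⟨-k, 1, by linarith⟩
  have hMS : M ∣ S := hcop3.symm.dvd_of_dvd_mul_left hMdvd3S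
  obtain ⟨k, hk⟩ := hMS
  have hc' : c = ((p:ℤ) + 1) ^ 2 + M * (-4 * k) := by
    rw [hc, hk]
    push_cast
    ring
  -- coprimality of (p+1)^2 and M
  have hn : Nat.Coprime ((p+1)^2) (2^p-1) := Nat.Coprime.pow_left 2 (aux_cop p hp hodd)
  have hg : Int.gcd ((((p+1)^2 : ℕ)) : ℤ) (((2^p - 1 : ℕ)) : ℤ) = 1 := by
    rw [Int.gcd_natCast_natCast]; exact hn
  have hcast1 : (((p+1)^2 : ℕ) : ℤ) = ((p:ℤ)+1)^2 := by push_cast; ring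
  have hcast2 : (((2^p - 1 : ℕ)) : ℤ) = (2:ℤ)^p - 1 := by
    have : 1 ≤ 2 ^ p := Nat.one_le_two_pow
    push_cast [this]
    ring
  rw [hcast1, hcast2, ← hM] at hg
  have hicop : IsCoprime (((p:ℤ)+1)^2) M := Int.isCoprime_iff_gcd_eq_one.mpr hg
  have : IsCoprime c M := by
    rw [hc']
    exact hicop.add_mul_left_left _
  exact Int.isCoprime_iff_gcd_eq_one.mp this
end

section
/- Let p be an odd prime such that p + 2 is also prime, and let c = p(p+2) - 4·(2^{p(p+2)} - 1)/(2^{p+2} - 1) + 1. Then gcd(c, 2^{p+2} - 1) = 1. -/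
theorem coprime_aux (p : ℕ) (hp : p.Prime) (hp2 : (p + 2).Prime) :
    Nat.Coprime (p - 1) (2 ^ (p + 2) - 1) := by
  by_contra h
  rw [Nat.Prime.not_coprime_iff_dvd] at h
  obtain ⟨q, hq, hq1, hq2⟩ := h
  have h2 : 2 ≤ 2 ^ (p + 2) := by
    calc 2 = 2^1 := rfl
    _ ≤ 2 ^ (p+2) := Nat.pow_le_pow_right (by norm_num) (by omega)
  have hqne2 : q ≠ 2 := by
    intro h2'
    subst h2'
    have : ¬ (2 ∣ 2 ^ (p + 2) - 1) := by
      have : 2 ∣ 2 ^ (p + 2) := dvd_pow_self 2 (by omega)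
      omega
    exact this hq2
  haveI : Fact q.Prime := ⟨hq⟩
  have hq2' : ((2 : ZMod q) ^ (p + 2) = 1) := by
    have : ((2 ^ (p + 2) - 1 : ℕ) : ZMod q) = 0 := (ZMod.natCast_eq_zero_iff _ _).mpr hq2
    push_cast [Nat.cast_sub (by omega : 1 ≤ 2 ^ (p + 2))] at this
    linear_combination this
  have hord : orderOf (2 : ZMod q) ∣ p + 2 := orderOf_dvd_of_pow_eq_one hq2'
  have hord' : orderOf (2 : ZMod q) = 1 ∨ orderOf (2 : ZMod q) = p + 2 :=
    (Nat.Prime.eq_one_or_self_of_dvd hp2 _ hord)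
  have hne1 : orderOf (2 : ZMod q) ≠ 1 := by
    intro h1
    have : (2 : ZMod q) = 1 := orderOf_eq_one_iff.mp h1
    have : ((1 : ℕ) : ZMod q) = 0 := by
      have := sub_eq_zero_of_eq this
      push_cast
      linear_combination this
    have := (ZMod.natCast_eq_zero_iff _ _).mp this
    have := Nat.le_of_dvd one_pos this
    have := hq.two_le
    omega
  have horder : orderOf (2 : ZMod q) = p + 2 := hord'.resolve_left hne1
  have h2ne0 : (2 : ZMod q) ≠ 0 := by
    intro h0
    have : ((2 : ℕ) : ZMod q) = 0 := by push_cast; exact h0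
    have := (ZMod.natCast_eq_zero_iff _ _).mp this
    exact hqne2 ((Nat.prime_dvd_prime_iff_eq hq Nat.prime_two).mp this)
  have hdvd : orderOf (2 : ZMod q) ∣ q - 1 :=
    orderOf_dvd_of_pow_eq_one (ZMod.pow_card_sub_one_eq_one h2ne0)
  rw [horder] at hdvd
  have hqbig : p + 2 ≤ q - 1 := Nat.le_of_dvd (by have := hq.two_le; omega) hdvd
  have hp1 : 1 ≤ p - 1 := by have := hp.two_le; omega
  have hqsmall : q ≤ p - 1 := Nat.le_of_dvd (by omega) hq1
  omega

theorem stmt_9 (p : ℕ) (hp : p.Prime) (hodd : Odd p) (hp2 : (p + 2).Prime)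
    (c : ℤ) (hc : c = p * (p + 2) - 4 * ((2 ^ (p * (p + 2)) - 1) / (2 ^ (p + 2) - 1)) + 1) :
    Int.gcd c (2 ^ (p + 2) - 1) = 1 := by
  set a : ℤ := 2 ^ (p + 2) with ha
  have haM : (1 : ℤ) < a := by
    have : (2:ℤ)^1 ≤ 2 ^ (p+2) := pow_le_pow_right₀ (by norm_num) (by omega)
    simpa [ha] using lt_of_lt_of_le (by norm_num) this
  have hMne : a - 1 ≠ 0 := by omega
  -- exact division
  have hdiv : (2 ^ (p * (p + 2)) - 1 : ℤ) / (a - 1) = ∑ i ∈ Finset.range p, a ^ i := by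
    have hgeom : (∑ i ∈ Finset.range p, a ^ i) * (a - 1) = a ^ p - 1 := geom_sum_mul a p
    have hpow : (2 : ℤ) ^ (p * (p + 2)) = a ^ p := by
      rw [ha, ← pow_mul, Nat.mul_comm]
    rw [hpow, ← hgeom, Int.mul_ediv_cancel _ hMne]
  rw [hdiv] at hc
  -- c = (p-1)^2 + (a-1) * k for some k
  have hsum : (a - 1) ∣ (∑ i ∈ Finset.range p, a ^ i) - p := by
    have : (∑ i ∈ Finset.range p, a ^ i) - p = ∑ i ∈ Finset.range p, (a ^ i - 1) := by
      rw [Finset.sum_sub_distrib]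
      simp
    rw [this]
    apply Finset.dvd_sum
    intro i _
    simpa using sub_dvd_pow_sub_pow a 1 i
  obtain ⟨k, hk⟩ := hsum
  have hcval : c = ((p : ℤ) - 1) ^ 2 + (a - 1) * (-4 * k) := by
    rw [hc]
    have : (∑ i ∈ Finset.range p, a ^ i) = p + (a - 1) * k := by omega
    rw [this]; ring
  have hcop : IsCoprime (((p:ℤ) - 1) ^ 2) (a - 1) := by
    have hnat : Nat.Coprime (p - 1) (2 ^ (p + 2) - 1) := coprime_aux p hp hp2
    have := hnat.pow_left 2
    have hcast : IsCoprime (((p - 1 : ℕ) : ℤ) ^ 2) (((2 ^ (p + 2) - 1 : ℕ)) : ℤ) := by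
      rw [← Nat.cast_pow, Nat.isCoprime_iff_coprime]
      exact this
    have h1 : ((p - 1 : ℕ) : ℤ) = (p : ℤ) - 1 := by
      have := hp.two_le; push_cast [Nat.cast_sub (by omega : 1 ≤ p)]; ring
    have h2 : ((2 ^ (p + 2) - 1 : ℕ) : ℤ) = a - 1 := by
      push_cast [Nat.cast_sub (Nat.one_le_two_pow : 1 ≤ 2 ^ (p + 2))]; rw [ha]
    rwa [h1, h2] at hcast
  have : IsCoprime c (a - 1) := by
    rw [hcval]
    exact (IsCoprime.add_mul_left_left hcop (-4 * k))
  rwa [Int.isCoprime_iff_gcd_eq_one] at this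
end

section
/- Let p be an odd prime with p + 2 also prime, and let c = p(p+2) - 4·(2^{p(p+2)} - 1)/(2^{p+2} - 1) + 1. Then gcd(c, (2^{p(p+2)} - 1)/((2^p - 1)(2^{p+2} - 1))) = 1. -/
/-!
Write `2 ^ (pq) - 1 = (2 ^ p - 1)(2 ^ q - 1) Q` with `q = p + 2`. Since
`c = pq + 1 - 4 (2 ^ p - 1) Q`, the claim is that `pq + 1` and `Q` are coprime. Let `r` be a
prime dividing both; then `r ∤ p, q`. If `2 ^ p ≡ 1 (mod r)`, then
`(2 ^ (pq) - 1) / (2 ^ p - 1) = ∑_{i<q} 2 ^ (pi) ≡ q (mod r)`, while it is a multiple of `Q`,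
so `r ∣ q`; symmetrically for `q`. Hence `2` has order `pq` modulo `r`, so `pq ∣ r - 1`, which
with `r ∣ pq + 1` forces `r = pq + 1`: an even number larger than `2`.
-/

open Finset

lemma isCoprime_two_pow_sub_one {m n : ℕ} (h : m.Coprime n) :
    IsCoprime ((2 : ℤ) ^ m - 1) (2 ^ n - 1) := by
  have hcast : ∀ k : ℕ, (2 : ℤ) ^ k - 1 = ((2 ^ k - 1 : ℕ) : ℤ) := fun k => by
    rw [Nat.cast_sub Nat.one_le_two_pow]; push_cast; rfl
  rw [hcast, hcast, Nat.isCoprime_iff_coprime, Nat.Coprime, Nat.pow_sub_one_gcd_pow_sub_one,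
    h.gcd_eq_one, pow_one]

lemma two_pow_sub_one_mul_dvd {m n : ℕ} (h : m.Coprime n) :
    ((2 : ℤ) ^ m - 1) * (2 ^ n - 1) ∣ 2 ^ (m * n) - 1 := by
  refine (isCoprime_two_pow_sub_one h).mul_dvd ?_ ?_
  · simpa [pow_mul] using sub_dvd_pow_sub_pow ((2 : ℤ) ^ m) 1 n
  · simpa [pow_mul'] using sub_dvd_pow_sub_pow ((2 : ℤ) ^ n) 1 m

lemma two_pow_sub_one_ne_zero {m : ℕ} (hm : m ≠ 0) : (2 : ℤ) ^ m - 1 ≠ 0 :=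
  sub_ne_zero.mpr (one_lt_pow₀ one_lt_two hm).ne'

lemma dvd_of_two_pow_eq_one_of_dvd_cofactor {m n r : ℕ} (hm : m ≠ 0) {Q : ℤ}
    (hQ : 2 ^ (m * n) - 1 = (2 ^ m - 1) * (2 ^ n - 1) * Q) (hrQ : (r : ℤ) ∣ Q)
    (h2 : (2 : ZMod r) ^ m = 1) : r ∣ n := by
  have hgeom : ∑ i ∈ range n, ((2 : ℤ) ^ m) ^ i = (2 ^ n - 1) * Q := by
    refine mul_left_cancel₀ (two_pow_sub_one_ne_zero hm) ?_
    rw [mul_geom_sum, ← pow_mul, hQ, mul_assoc]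
  have hcast := congrArg (Int.cast : ℤ → ZMod r) hgeom
  push_cast [(ZMod.intCast_zmod_eq_zero_iff_dvd Q r).mpr hrQ] at hcast
  simpa [h2, ZMod.natCast_eq_zero_iff] using hcast

lemma mul_dvd_sub_one_of_dvd_cofactor {p q r : ℕ} (hp : p.Prime) (hq : q.Prime) [Fact r.Prime]
    (hrp : ¬ r ∣ p) (hrq : ¬ r ∣ q) {Q : ℤ}
    (hQ : 2 ^ (p * q) - 1 = (2 ^ p - 1) * (2 ^ q - 1) * Q) (hrQ : (r : ℤ) ∣ Q) :
    p * q ∣ r - 1 := by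
  have h2 : (2 : ZMod r) ^ (p * q) = 1 := by
    have hcast := congrArg (Int.cast : ℤ → ZMod r) hQ
    push_cast [(ZMod.intCast_zmod_eq_zero_iff_dvd Q r).mpr hrQ, mul_zero] at hcast
    exact sub_eq_zero.mp hcast
  have hQ' : 2 ^ (q * p) - 1 = ((2 : ℤ) ^ q - 1) * (2 ^ p - 1) * Q := by
    rw [mul_comm q, mul_comm ((2 : ℤ) ^ q - 1), hQ]
  obtain ⟨a, b, ha, hb, hab⟩ := Nat.dvd_mul.mp (orderOf_dvd_of_pow_eq_one h2)
  rcases (Nat.dvd_prime hp).mp ha with rfl | rfl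
  · refine absurd (dvd_of_two_pow_eq_one_of_dvd_cofactor hq.ne_zero hQ' hrQ ?_) hrp
    rw [← orderOf_dvd_iff_pow_eq_one, ← hab, one_mul]; exact hb
  rcases (Nat.dvd_prime hq).mp hb with rfl | rfl
  · refine absurd (dvd_of_two_pow_eq_one_of_dvd_cofactor hp.ne_zero hQ hrQ ?_) hrq
    rw [← orderOf_dvd_iff_pow_eq_one, ← hab, mul_one]
  rw [hab]
  exact ZMod.orderOf_dvd_card_sub_one
    (ne_zero_pow (mul_ne_zero hp.ne_zero hq.ne_zero) (h2 ▸ one_ne_zero))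

lemma gcd_mul_add_one_cofactor_eq_one {p q : ℕ} (hp : p.Prime) (hq : q.Prime)
    (hpo : Odd p) (hqo : Odd q) {Q : ℤ} (hQ : 2 ^ (p * q) - 1 = (2 ^ p - 1) * (2 ^ q - 1) * Q) :
    Int.gcd (p * q + 1) Q = 1 := by
  rw [Int.gcd_eq_natAbs]
  refine Nat.coprime_of_dvd fun r hr hrpq hrQ => ?_
  have : Fact r.Prime := ⟨hr⟩
  replace hrpq : r ∣ p * q + 1 := by
    rwa [show ((p : ℤ) * q + 1).natAbs = p * q + 1 by norm_cast] at hrpq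
  have hr_not_dvd : ∀ {k : ℕ}, k ∣ p * q → ¬ r ∣ k := fun hk hrk =>
    hr.not_dvd_one ((Nat.dvd_add_right (hrk.trans hk)).mp hrpq)
  have hsub := mul_dvd_sub_one_of_dvd_cofactor hp hq (hr_not_dvd (dvd_mul_right p q))
    (hr_not_dvd (dvd_mul_left q p)) hQ (Int.natCast_dvd.mpr hrQ)
  have hr_eq : r = p * q + 1 := by
    have := hr.two_le
    have := Nat.le_of_dvd (by omega) hrpq
    have := Nat.le_of_dvd (by omega) hsub
    omega
  have heven : Even r := hr_eq ▸ (hpo.mul hqo).add_one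
  have := hr.even_iff.mp heven
  have := Nat.mul_le_mul hp.two_le hq.two_le
  omega

theorem stmt_10 (p : ℕ) (hp : p.Prime) (hodd : Odd p) (hp2 : (p + 2).Prime)
    (c : ℤ) (hc : c = p * (p + 2) - 4 * ((2 ^ (p * (p + 2)) - 1) / (2 ^ (p + 2) - 1)) + 1) :
    Int.gcd c ((2 ^ (p * (p + 2)) - 1) / ((2 ^ p - 1) * (2 ^ (p + 2) - 1))) = 1 := by
  have hcop : p.Coprime (p + 2) := (Nat.coprime_primes hp hp2).mpr (by omega)
  obtain ⟨Q, hQ⟩ := two_pow_sub_one_mul_dvd hcop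
  have hA := two_pow_sub_one_ne_zero hp.ne_zero
  have hB := two_pow_sub_one_ne_zero hp2.ne_zero
  have hquot : (2 ^ (p * (p + 2)) - 1) / (2 ^ (p + 2) - 1) = ((2 : ℤ) ^ p - 1) * Q := by
    rw [hQ, mul_right_comm, mul_comm, Int.mul_ediv_cancel_left _ hB]
  rw [hc, hquot, hQ, Int.mul_ediv_cancel_left _ (mul_ne_zero hA hB),
    show (p : ℤ) * (p + 2) - 4 * ((2 ^ p - 1) * Q) + 1 = p * (p + 2) + 1 + -(4 * (2 ^ p - 1)) * Q
      by ring, Int.gcd_add_mul_right_left]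
  have hodd2 : Odd (p + 2) := hodd.add_even even_two
  exact_mod_cast gcd_mul_add_one_cofactor_eq_one hp hp2 hodd hodd2 hQ
end

section
/- Let p and p + 2 both be prime and let s_B be the modified two-prime sequence of period N = p(p+2): s_B(i) = 1 if i ≡ 0 (mod p+2); s_B(i) = 1 if i ≡ 0 (mod p) and i ≢ 0 (mod p+2); otherwise s_B(i) = (1 - (i/p)(i/(p+2)))/2, where (·/·) is the Legendre symbol. Then with S_B(x) = Σ_{i=0}^{N-1} s_B(i) x^i, one has gcd(S_B(2), 2^N - 1) = 1, i.e., the 2-adic complexity of s_B is log_2(2^{p(p+2)} - 1). -/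
open Finset

/-- The modified two-prime sequence of period `p * (p + 2)`, with values in `{0, 1}`. -/
def modTwoPrimeSeq (p i : ℕ) : ℕ :=
  if (i : ZMod (p + 2)) = 0 then 1
  else if (i : ZMod p) = 0 then 1
  else ((1 - jacobiSym (i : ℤ) p * jacobiSym (i : ℤ) (p + 2)) / 2).toNat




variable {R : Type*} [CommRing R]

lemma pow_mod_eq {ζ : R} {n : ℕ} (hζ : ζ ^ n = 1) (m : ℕ) : ζ ^ m = ζ ^ (m % n) := by
  conv_lhs => rw [← Nat.div_add_mod m n, pow_add, pow_mul, hζ, one_pow, one_mul]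

lemma pow_val_add {ζ : R} {n : ℕ} [NeZero n] (hζ : ζ ^ n = 1) (a b : ZMod n) :
    ζ ^ (a + b).val = ζ ^ a.val * ζ ^ b.val := by
  rw [ZMod.val_add, ← pow_mod_eq hζ, pow_add]

lemma gauss_sq (p : ℕ) [Fact p.Prime] (hp2 : p ≠ 2) (ψ : ZMod p → R)
    (hψ : ∀ a b, ψ (a + b) = ψ a * ψ b) (hψ0 : ψ 0 = 1) :
    (∑ a : ZMod p, ((quadraticChar (ZMod p) a : ℤ) : R) * ψ a) ^ 2
      = ((quadraticChar (ZMod p) (-1) : ℤ) : R) * ((p : R) - ∑ a : ZMod p, ψ a) := by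
  have hchar : ringChar (ZMod p) ≠ 2 := by
    rw [ZMod.ringChar_zmod_n]; exact hp2
  set χ : ZMod p → R := fun a => ((quadraticChar (ZMod p) a : ℤ) : R) with hχ
  have hχmul : ∀ a b, χ (a * b) = χ a * χ b := by
    intro a b; simp only [hχ, map_mul, Int.cast_mul]
  have hχsq : ∀ b : ZMod p, b ≠ 0 → χ b * χ b = 1 := by
    intro b hb
    have h1 := quadraticChar_sq_one (F := ZMod p) hb
    rw [sq] at h1
    show ((quadraticChar (ZMod p) b : ℤ) : R) * ((quadraticChar (ZMod p) b : ℤ) : R) = 1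
    rw [← Int.cast_mul, h1, Int.cast_one]
  have hχsum : ∑ a : ZMod p, χ a = 0 := by
    show ∑ a : ZMod p, ((quadraticChar (ZMod p) a : ℤ) : R) = 0
    rw [← Int.cast_sum, quadraticChar_sum_zero hchar, Int.cast_zero]
  have hχ0 : χ 0 = 0 := by
    simp [hχ, quadraticChar_zero]
  set Sψ := ∑ a : ZMod p, ψ a with hSψ
  set g := ∑ a : ZMod p, χ a * ψ a with hg
  -- key pointwise identity in b
  have key : ∀ b : ZMod p,
      (χ b * ψ b) * g = if b = 0 then 0 else ∑ t : ZMod p, χ t * ψ (b * (t + 1)) := by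
    intro b
    by_cases hb : b = 0
    · simp [hb, hχ0]
    · rw [if_neg hb]
      have hre : g = ∑ t : ZMod p, χ (b * t) * ψ (b * t) := by
        rw [hg]
        exact (Fintype.sum_equiv (Equiv.mulLeft₀ b hb) _ _ (fun t => rfl)).symm
      rw [hre, Finset.mul_sum]
      refine Finset.sum_congr rfl fun t _ => ?_
      rw [hχmul, show b * (t + 1) = b + b * t by ring, hψ]
      calc χ b * ψ b * (χ b * χ t * ψ (b * t))
          = (χ b * χ b) * (χ t * (ψ b * ψ (b * t))) := by ring
        _ = χ t * (ψ b * ψ (b * t)) := by rw [hχsq b hb, one_mul]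
  have hgsq : g ^ 2 = ∑ b : ZMod p,
      (if b = 0 then 0 else ∑ t : ZMod p, χ t * ψ (b * (t + 1))) := by
    rw [sq]
    nth_rewrite 1 [hg]
    rw [Finset.sum_mul]
    exact Finset.sum_congr rfl fun b _ => key b
  have hgsq2 : g ^ 2 = ∑ b ∈ Finset.univ.erase (0 : ZMod p),
      ∑ t : ZMod p, χ t * ψ (b * (t + 1)) := by
    rw [hgsq, ← Finset.sum_erase (f := fun b : ZMod p =>
      if b = 0 then (0 : R) else ∑ t : ZMod p, χ t * ψ (b * (t + 1)))
      Finset.univ (a := 0) (if_pos rfl)]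
    exact Finset.sum_congr rfl fun b hb => if_neg (Finset.ne_of_mem_erase hb)
  rw [hgsq2, Finset.sum_comm]
  have inner : ∀ t : ZMod p, ∑ b ∈ Finset.univ.erase (0 : ZMod p), χ t * ψ (b * (t + 1))
      = χ t * (if t = -1 then ((p : R) - 1) else (Sψ - 1)) := by
    intro t
    rw [← Finset.mul_sum]
    congr 1
    by_cases ht : t = -1
    · rw [if_pos ht]
      subst ht
      have : ∀ b ∈ Finset.univ.erase (0 : ZMod p), ψ (b * (-1 + 1)) = 1 := by
        intro b _; rw [neg_add_cancel, mul_zero, hψ0]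
      rw [Finset.sum_congr rfl this, Finset.sum_const,
        Finset.card_erase_of_mem (Finset.mem_univ _), Finset.card_univ, ZMod.card,
        nsmul_eq_mul, mul_one, Nat.cast_sub (Fact.out : p.Prime).one_lt.le]
      rw [Nat.cast_one]
    · rw [if_neg ht]
      have h1 : t + 1 ≠ 0 := fun h => ht (by linear_combination (h : t + 1 = 0))
      have := Finset.sum_nbij' (i := fun b => b * (t + 1)) (j := fun c => c * (t + 1)⁻¹)
        (s := Finset.univ.erase (0 : ZMod p)) (t := Finset.univ.erase (0 : ZMod p))
        (f := fun b => ψ (b * (t + 1))) (g := fun c => ψ c)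
        (fun b hb => by
          simp only [Finset.mem_erase, Finset.mem_univ, and_true] at *
          exact mul_ne_zero hb h1)
        (fun c hc => by
          simp only [Finset.mem_erase, Finset.mem_univ, and_true] at *
          exact mul_ne_zero hc (inv_ne_zero h1))
        (fun b _ => by field_simp)
        (fun c _ => by field_simp)
        (fun b _ => rfl)
      rw [this, Finset.sum_erase_eq_sub (Finset.mem_univ _), hψ0, ← hSψ]
  rw [Finset.sum_congr rfl fun t _ => inner t,
    ← Finset.sum_erase_add _ _ (Finset.mem_univ (-1 : ZMod p)), if_pos rfl]
  have herase : ∑ t ∈ Finset.univ.erase (-1 : ZMod p),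
      χ t * (if t = -1 then ((p : R) - 1) else (Sψ - 1))
      = (0 - χ (-1)) * (Sψ - 1) := by
    rw [← hχsum, ← Finset.sum_erase_eq_sub (Finset.mem_univ _), Finset.sum_mul]
    exact Finset.sum_congr rfl fun t ht => by
      rw [if_neg (Finset.ne_of_mem_erase ht)]
  rw [herase]
  ring



lemma identityI (p : ℕ) (hp : p.Prime) (hodd : Odd p) (hp2 : (p + 2).Prime)
    {F : Type*} [Field F] (h2N : (2 : F) ^ (p * (p + 2)) = 1)
    (hS0 : ((∑ i ∈ Finset.range (p * (p + 2)), modTwoPrimeSeq p i * 2 ^ i : ℕ) : F) = 0) :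
    ∑ i ∈ Finset.range (p * (p + 2)),
        ((jacobiSym (i : ℤ) p * jacobiSym (i : ℤ) (p + 2) : ℤ) : F) * 2 ^ i
      = (∑ k ∈ Finset.range (p + 2), (2 : F) ^ (p * k))
        + (∑ k ∈ Finset.range p, (2 : F) ^ ((p + 2) * k)) - 1 := by
  haveI : NeZero (p + 2) := ⟨by omega⟩
  haveI : NeZero p := ⟨hp.pos.ne'⟩
  have h3p : 3 ≤ p := by
    have := hp.two_le
    rcases Nat.odd_iff.mp hodd with h
    omega
  have hco : Nat.Coprime p (p + 2) :=
    (Nat.coprime_primes hp hp2).mpr (by omega)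
  set N := p * (p + 2) with hN
  have hNpos : 0 < N := by positivity
  -- pointwise identity
  have key : ∀ i ∈ Finset.range N,
      ((1 : F) - 2 * (modTwoPrimeSeq p i : F)) * 2 ^ i
        = ((jacobiSym (i : ℤ) p * jacobiSym (i : ℤ) (p + 2) : ℤ) : F) * 2 ^ i
          - (if p ∣ i then (2 : F) ^ i else 0) - (if (p + 2) ∣ i then (2 : F) ^ i else 0)
          + (if i = 0 then (2 : F) ^ i else 0) := by
    intro i hi
    rw [Finset.mem_range] at hi
    have hq'iff : ((i : ZMod (p + 2)) = 0) ↔ (p + 2) ∣ i :=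
      ZMod.natCast_eq_zero_iff i (p + 2)
    have hpiff : ((i : ZMod p) = 0) ↔ p ∣ i := ZMod.natCast_eq_zero_iff i p
    by_cases h2 : (p + 2) ∣ i
    · have hJ2 : jacobiSym (i : ℤ) (p + 2) = 0 := by
        rw [jacobiSym.eq_zero_iff_not_coprime]
        rw [Int.gcd_natCast_natCast]
        have : (p + 2) ∣ Nat.gcd i (p + 2) := Nat.dvd_gcd h2 dvd_rfl
        intro h1
        rw [h1] at this
        exact absurd (Nat.le_of_dvd one_pos this) (by omega)
      rw [modTwoPrimeSeq, if_pos (hq'iff.mpr h2)]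
      by_cases hpd : p ∣ i
      · have hi0 : i = 0 := by
          have hNd : N ∣ i := Nat.Coprime.mul_dvd_of_dvd_of_dvd hco hpd h2
          rcases Nat.eq_zero_or_pos i with h | h
          · exact h
          · exact absurd (Nat.le_of_dvd h hNd) (by omega)
        subst hi0
        rw [if_pos (dvd_zero p), if_pos (dvd_zero (p + 2)), if_pos rfl, hJ2]
        push_cast
        ring
      · have hi0 : i ≠ 0 := fun h => hpd (h ▸ dvd_zero p)
        rw [if_neg hpd, if_pos h2, if_neg hi0, hJ2]
        push_cast
        ring
    · by_cases hpd : p ∣ i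
      · have hJ1 : jacobiSym (i : ℤ) p = 0 := by
          rw [jacobiSym.eq_zero_iff_not_coprime]
          rw [Int.gcd_natCast_natCast]
          have : p ∣ Nat.gcd i p := Nat.dvd_gcd hpd dvd_rfl
          intro h1
          rw [h1] at this
          exact absurd (Nat.le_of_dvd one_pos this) (by omega)
        have hi0 : i ≠ 0 := fun h => h2 (h ▸ dvd_zero (p + 2))
        rw [modTwoPrimeSeq, if_neg (fun h => h2 (hq'iff.mp h)), if_pos (hpiff.mpr hpd),
          if_pos hpd, if_neg h2, if_neg hi0, hJ1]
        push_cast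
        ring
      · have hg1 : Int.gcd (i : ℤ) p = 1 := by
          rw [Int.gcd_natCast_natCast]
          exact Nat.Coprime.symm ((Nat.Prime.coprime_iff_not_dvd hp).mpr hpd)
        have hg2 : Int.gcd (i : ℤ) ((p + 2 : ℕ) : ℤ) = 1 := by
          rw [Int.gcd_natCast_natCast]
          exact Nat.Coprime.symm ((Nat.Prime.coprime_iff_not_dvd hp2).mpr (by exact_mod_cast h2))
        have hi0 : i ≠ 0 := by
          rintro rfl
          exact h2 (dvd_zero _)
        rw [modTwoPrimeSeq, if_neg (fun h => h2 (hq'iff.mp h)),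
          if_neg (fun h => hpd (hpiff.mp h)), if_neg hpd, if_neg h2, if_neg hi0]
        rcases jacobiSym.eq_one_or_neg_one hg1 with hJ1 | hJ1 <;>
          rcases jacobiSym.eq_one_or_neg_one hg2 with hJ2 | hJ2 <;>
          rw [hJ1, hJ2] <;> norm_num
  -- sum the pointwise identity
  have hsum := Finset.sum_congr rfl key
  -- LHS
  have hgeom : ∑ i ∈ Finset.range N, (2 : F) ^ i = 0 := by
    have h := geom_sum_mul (2 : F) N
    rw [h2N, sub_self] at h
    rw [show (2 : F) - 1 = 1 by norm_num, mul_one] at h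
    exact h
  have hLHS : ∑ i ∈ Finset.range N, ((1 : F) - 2 * (modTwoPrimeSeq p i : F)) * 2 ^ i = 0 := by
    have : ∀ i ∈ Finset.range N, ((1 : F) - 2 * (modTwoPrimeSeq p i : F)) * 2 ^ i
        = (2 : F) ^ i - 2 * ((modTwoPrimeSeq p i : F) * 2 ^ i) := by
      intro i _; ring
    rw [Finset.sum_congr rfl this, Finset.sum_sub_distrib, hgeom, ← Finset.mul_sum]
    push_cast at hS0
    rw [hS0]
    ring
  -- the divisor sums
  have hdiv : ∀ (d m : ℕ), 0 < d → N = d * m →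
      (∑ i ∈ Finset.range N, if d ∣ i then (2 : F) ^ i else 0)
        = ∑ k ∈ Finset.range m, (2 : F) ^ (d * k) := by
    intro d m hd hdm
    rw [← Finset.sum_filter]
    refine Finset.sum_nbij' (fun i => i / d) (fun k => d * k) ?_ ?_ ?_ ?_ ?_
    · intro i hi
      simp only [Finset.mem_filter, Finset.mem_range] at hi
      rw [Finset.mem_range, Nat.div_lt_iff_lt_mul hd, mul_comm]
      omega
    · intro k hk
      simp only [Finset.mem_range] at hk
      simp only [Finset.mem_filter, Finset.mem_range]
      exact ⟨by rw [hdm]; exact Nat.mul_lt_mul_of_le_of_lt (le_refl d) hk hd, Dvd.intro k rfl⟩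
    · intro i hi
      simp only [Finset.mem_filter] at hi
      exact Nat.mul_div_cancel' hi.2
    · intro k _
      exact Nat.mul_div_cancel_left k hd
    · intro i hi
      simp only [Finset.mem_filter] at hi
      rw [Nat.mul_div_cancel' hi.2]
  have hd1 := hdiv p (p + 2) hp.pos rfl
  have hd2 := hdiv (p + 2) p (by omega) (mul_comm p (p + 2))
  have hd0 : (∑ i ∈ Finset.range N, if i = 0 then (2 : F) ^ i else 0) = 1 := by
    rw [Finset.sum_ite_eq' (Finset.range N) 0 (fun i => (2 : F) ^ i),
      if_pos (Finset.mem_range.mpr hNpos), pow_zero]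
  rw [hLHS] at hsum
  rw [Finset.sum_add_distrib, Finset.sum_sub_distrib, Finset.sum_sub_distrib, hd1, hd2, hd0]
    at hsum
  linear_combination -hsum

lemma identityII (p : ℕ) (hp : p.Prime) (hodd : Odd p) (hp2 : (p + 2).Prime)
    {F : Type*} [Field F] (h2N : (2 : F) ^ (p * (p + 2)) = 1) :
    (∑ i ∈ Finset.range (p * (p + 2)),
        ((jacobiSym (i : ℤ) p * jacobiSym (i : ℤ) (p + 2) : ℤ) : F) * 2 ^ i) ^ 2
      = -((((p : ℕ) : F) - ∑ k ∈ Finset.range p, (2 : F) ^ ((p + 2) * k))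
          * (((p + 2 : ℕ) : F) - ∑ k ∈ Finset.range (p + 2), (2 : F) ^ (p * k))) := by
  haveI fp : Fact p.Prime := ⟨hp⟩
  haveI fq : Fact (p + 2).Prime := ⟨hp2⟩
  haveI : NeZero (p * (p + 2)) := ⟨Nat.mul_ne_zero hp.pos.ne' (by omega)⟩
  have hpo : p % 2 = 1 := Nat.odd_iff.mp hodd
  have h3p : 3 ≤ p := by have := hp.two_le; omega
  have hp2' : p ≠ 2 := by omega
  have hq2' : p + 2 ≠ 2 := by omega
  have hco : Nat.Coprime p (p + 2) := (Nat.coprime_primes hp hp2).mpr (by omega)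
  set N := p * (p + 2) with hN
  let Φ : ZMod N ≃+* ZMod p × ZMod (p + 2) := ZMod.chineseRemainder hco
  set e : ZMod N → F := fun x => (2 : F) ^ x.val with he_def
  have he : ∀ x y : ZMod N, e (x + y) = e x * e y := fun x y => pow_val_add h2N x y
  have he0 : e 0 = 1 := by simp [he_def, ZMod.val_zero]
  -- components of Φ are the cast homs
  have hΦ1 : ∀ x : ZMod N, ((x.val : ℕ) : ZMod p) = (Φ x).1 := by
    have h : (RingHom.fst (ZMod p) (ZMod (p + 2))).comp (Φ : ZMod N →+* ZMod p × ZMod (p + 2))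
        = ZMod.castHom (dvd_mul_right p (p + 2)) (ZMod p) := RingHom.ext_zmod _ _
    intro x
    have := DFunLike.congr_fun h x
    simp only [RingHom.comp_apply, RingHom.coe_fst, ZMod.castHom_apply] at this
    rw [ZMod.natCast_val, ← this]
    rfl
  have hΦ2 : ∀ x : ZMod N, ((x.val : ℕ) : ZMod (p + 2)) = (Φ x).2 := by
    have h : (RingHom.snd (ZMod p) (ZMod (p + 2))).comp (Φ : ZMod N →+* ZMod p × ZMod (p + 2))
        = ZMod.castHom (dvd_mul_left (p + 2) p) (ZMod (p + 2)) := RingHom.ext_zmod _ _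
    intro x
    have := DFunLike.congr_fun h x
    simp only [RingHom.comp_apply, RingHom.coe_snd, ZMod.castHom_apply] at this
    rw [ZMod.natCast_val, ← this]
    rfl
  set ψ1 : ZMod p → F := fun a => e (Φ.symm (a, 0)) with hψ1_def
  set ψ2 : ZMod (p + 2) → F := fun b => e (Φ.symm (0, b)) with hψ2_def
  have hψ1mul : ∀ a b : ZMod p, ψ1 (a + b) = ψ1 a * ψ1 b := by
    intro a b
    show e (Φ.symm (a + b, 0)) = e (Φ.symm (a, 0)) * e (Φ.symm (b, 0))
    have h : ((a + b, 0) : ZMod p × ZMod (p + 2)) = (a, 0) + (b, 0) := by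
      simp [Prod.ext_iff]
    rw [h, map_add, he]
  have hψ2mul : ∀ a b : ZMod (p + 2), ψ2 (a + b) = ψ2 a * ψ2 b := by
    intro a b
    show e (Φ.symm (0, a + b)) = e (Φ.symm (0, a)) * e (Φ.symm (0, b))
    have h : ((0, a + b) : ZMod p × ZMod (p + 2)) = (0, a) + (0, b) := by
      simp [Prod.ext_iff]
    rw [h, map_add, he]
  have hψ10 : ψ1 0 = 1 := by
    show e (Φ.symm (0, 0)) = 1
    rw [show ((0, 0) : ZMod p × ZMod (p + 2)) = 0 from rfl, map_zero, he0]
  have hψ20 : ψ2 0 = 1 := by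
    show e (Φ.symm (0, 0)) = 1
    rw [show ((0, 0) : ZMod p × ZMod (p + 2)) = 0 from rfl, map_zero, he0]
  -- move the sum to `ZMod N`
  have hstep1 : ∑ i ∈ Finset.range N,
      ((jacobiSym (i : ℤ) p * jacobiSym (i : ℤ) (p + 2) : ℤ) : F) * 2 ^ i
      = ∑ x : ZMod N,
        ((jacobiSym (x.val : ℤ) p * jacobiSym (x.val : ℤ) (p + 2) : ℤ) : F) * e x := by
    refine Finset.sum_nbij' (fun i => (i : ZMod N)) (fun x => x.val) ?_ ?_ ?_ ?_ ?_
    · intro i _; exact Finset.mem_univ _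
    · intro x _; exact Finset.mem_range.mpr (ZMod.val_lt x)
    · intro i hi; exact ZMod.val_natCast_of_lt (Finset.mem_range.mp hi)
    · intro x _; exact ZMod.natCast_rightInverse x
    · intro i hi
      simp only [he_def, ZMod.val_natCast_of_lt (Finset.mem_range.mp hi)]
  -- factor through the CRT equivalence
  have hstep2 : ∑ x : ZMod N,
      ((jacobiSym (x.val : ℤ) p * jacobiSym (x.val : ℤ) (p + 2) : ℤ) : F) * e x
      = (∑ a : ZMod p, ((quadraticChar (ZMod p) a : ℤ) : F) * ψ1 a)
        * (∑ b : ZMod (p + 2), ((quadraticChar (ZMod (p + 2)) b : ℤ) : F) * ψ2 b) := by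
    rw [← Equiv.sum_comp Φ.symm.toEquiv
      (fun x : ZMod N =>
        ((jacobiSym (x.val : ℤ) p * jacobiSym (x.val : ℤ) (p + 2) : ℤ) : F) * e x),
      Finset.sum_mul_sum, Fintype.sum_prod_type]
    refine Finset.sum_congr rfl fun a _ => Finset.sum_congr rfl fun b _ => ?_
    have hya : (((Φ.symm (a, b)).val : ℕ) : ZMod p) = a := by
      rw [hΦ1]
      rw [RingEquiv.apply_symm_apply]
    have hyb : (((Φ.symm (a, b)).val : ℕ) : ZMod (p + 2)) = b := by
      rw [hΦ2]
      rw [RingEquiv.apply_symm_apply]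
    have hJ1 : jacobiSym ((Φ.symm (a, b)).val : ℤ) p = quadraticChar (ZMod p) a := by
      rw [← jacobiSym.legendreSym.to_jacobiSym]
      show quadraticChar (ZMod p) (((((Φ.symm (a, b)).val : ℕ) : ℤ) : ZMod p)) = _
      rw [Int.cast_natCast, hya]
    have hJ2 : jacobiSym ((Φ.symm (a, b)).val : ℤ) (p + 2)
        = quadraticChar (ZMod (p + 2)) b := by
      rw [← jacobiSym.legendreSym.to_jacobiSym]
      show quadraticChar (ZMod (p + 2)) (((((Φ.symm (a, b)).val : ℕ) : ℤ) : ZMod (p + 2))) = _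
      rw [Int.cast_natCast, hyb]
    have hy : e (Φ.symm (a, b)) = ψ1 a * ψ2 b := by
      have h : Φ.symm (a, b) = Φ.symm (a, 0) + Φ.symm (0, b) := by
        rw [← map_add]
        congr 1
        simp [Prod.ext_iff]
      rw [h, he]
    show ((jacobiSym ((Φ.symm (a, b)).val : ℤ) p
        * jacobiSym ((Φ.symm (a, b)).val : ℤ) (p + 2) : ℤ) : F) * e (Φ.symm (a, b)) = _
    rw [hJ1, hJ2, hy]
    push_cast
    ring
  -- the additive-character sums are the geometric-type sums
  have hSps1 : ∑ a : ZMod p, ψ1 a = ∑ k ∈ Finset.range p, (2 : F) ^ ((p + 2) * k) := by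
    have hA : ∑ a : ZMod p, ψ1 a
        = ∑ x ∈ Finset.univ.filter (fun x : ZMod N => (p + 2) ∣ x.val), e x := by
      refine Finset.sum_nbij' (fun a => Φ.symm (a, 0))
        (fun x => ((x.val : ℕ) : ZMod p)) ?_ ?_ ?_ ?_ ?_
      · intro a _
        simp only [Finset.mem_filter, Finset.mem_univ, true_and]
        rw [← ZMod.natCast_eq_zero_iff, hΦ2, RingEquiv.apply_symm_apply]
      · intro x _; exact Finset.mem_univ _
      · intro a _
        show (((Φ.symm (a, 0)).val : ℕ) : ZMod p) = a
        rw [hΦ1, RingEquiv.apply_symm_apply]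
      · intro x hx
        simp only [Finset.mem_filter, Finset.mem_univ, true_and] at hx
        have h2 : ((x.val : ℕ) : ZMod (p + 2)) = 0 :=
          (ZMod.natCast_eq_zero_iff _ _).mpr hx
        show Φ.symm (((x.val : ℕ) : ZMod p), 0) = x
        apply Φ.injective
        rw [RingEquiv.apply_symm_apply]
        exact Prod.ext (hΦ1 x) (h2.symm.trans (hΦ2 x))
      · intro a _; rfl
    have hB : ∑ x ∈ Finset.univ.filter (fun x : ZMod N => (p + 2) ∣ x.val), e x
        = ∑ k ∈ Finset.range p, (2 : F) ^ ((p + 2) * k) := by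
      refine Finset.sum_nbij' (fun x => x.val / (p + 2))
        (fun k => (((p + 2) * k : ℕ) : ZMod N)) ?_ ?_ ?_ ?_ ?_
      · intro x hx
        simp only [Finset.mem_filter, Finset.mem_univ, true_and] at hx
        rw [Finset.mem_range, Nat.div_lt_iff_lt_mul (by omega)]
        exact hN ▸ ZMod.val_lt x
      · intro k hk
        rw [Finset.mem_range] at hk
        have hlt : (p + 2) * k < N := by
          rw [hN, mul_comm p (p + 2)]
          exact Nat.mul_lt_mul_of_le_of_lt (le_refl _) hk (by omega)
        refine Finset.mem_filter.mpr ⟨Finset.mem_univ _, ?_⟩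
        rw [ZMod.val_natCast_of_lt hlt]
        exact Dvd.intro k rfl
      · intro x hx
        simp only [Finset.mem_filter, Finset.mem_univ, true_and] at hx
        show (((p + 2) * (x.val / (p + 2)) : ℕ) : ZMod N) = x
        rw [Nat.mul_div_cancel' hx]
        exact ZMod.natCast_rightInverse x
      · intro k hk
        rw [Finset.mem_range] at hk
        have hlt : (p + 2) * k < N := by
          rw [hN, mul_comm p (p + 2)]
          exact Nat.mul_lt_mul_of_le_of_lt (le_refl _) hk (by omega)
        show ((((p + 2) * k : ℕ) : ZMod N)).val / (p + 2) = k
        rw [ZMod.val_natCast_of_lt hlt]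
        exact Nat.mul_div_cancel_left k (by omega)
      · intro x hx
        simp only [Finset.mem_filter, Finset.mem_univ, true_and] at hx
        show e x = (2 : F) ^ ((p + 2) * (x.val / (p + 2)))
        simp only [he_def]
        rw [Nat.mul_div_cancel' hx]
    rw [hA, hB]
  have hSps2 : ∑ b : ZMod (p + 2), ψ2 b = ∑ k ∈ Finset.range (p + 2), (2 : F) ^ (p * k) := by
    have hA : ∑ b : ZMod (p + 2), ψ2 b
        = ∑ x ∈ Finset.univ.filter (fun x : ZMod N => p ∣ x.val), e x := by
      refine Finset.sum_nbij' (fun b => Φ.symm (0, b))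
        (fun x => ((x.val : ℕ) : ZMod (p + 2))) ?_ ?_ ?_ ?_ ?_
      · intro b _
        simp only [Finset.mem_filter, Finset.mem_univ, true_and]
        rw [← ZMod.natCast_eq_zero_iff, hΦ1, RingEquiv.apply_symm_apply]
      · intro x _; exact Finset.mem_univ _
      · intro b _
        show (((Φ.symm (0, b)).val : ℕ) : ZMod (p + 2)) = b
        rw [hΦ2, RingEquiv.apply_symm_apply]
      · intro x hx
        simp only [Finset.mem_filter, Finset.mem_univ, true_and] at hx
        have h2 : ((x.val : ℕ) : ZMod p) = 0 :=
          (ZMod.natCast_eq_zero_iff _ _).mpr hx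
        show Φ.symm (0, ((x.val : ℕ) : ZMod (p + 2))) = x
        apply Φ.injective
        rw [RingEquiv.apply_symm_apply]
        exact Prod.ext (h2.symm.trans (hΦ1 x)) (hΦ2 x)
      · intro b _; rfl
    have hB : ∑ x ∈ Finset.univ.filter (fun x : ZMod N => p ∣ x.val), e x
        = ∑ k ∈ Finset.range (p + 2), (2 : F) ^ (p * k) := by
      refine Finset.sum_nbij' (fun x => x.val / p)
        (fun k => ((p * k : ℕ) : ZMod N)) ?_ ?_ ?_ ?_ ?_
      · intro x hx
        simp only [Finset.mem_filter, Finset.mem_univ, true_and] at hx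
        rw [Finset.mem_range, Nat.div_lt_iff_lt_mul hp.pos, mul_comm (p + 2) p]
        exact hN ▸ ZMod.val_lt x
      · intro k hk
        rw [Finset.mem_range] at hk
        have hlt : p * k < N := by
          rw [hN]
          exact Nat.mul_lt_mul_of_le_of_lt (le_refl _) hk hp.pos
        refine Finset.mem_filter.mpr ⟨Finset.mem_univ _, ?_⟩
        rw [ZMod.val_natCast_of_lt hlt]
        exact Dvd.intro k rfl
      · intro x hx
        simp only [Finset.mem_filter, Finset.mem_univ, true_and] at hx
        show ((p * (x.val / p) : ℕ) : ZMod N) = x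
        rw [Nat.mul_div_cancel' hx]
        exact ZMod.natCast_rightInverse x
      · intro k hk
        rw [Finset.mem_range] at hk
        have hlt : p * k < N := by
          rw [hN]
          exact Nat.mul_lt_mul_of_le_of_lt (le_refl _) hk hp.pos
        show (((p * k : ℕ) : ZMod N)).val / p = k
        rw [ZMod.val_natCast_of_lt hlt]
        exact Nat.mul_div_cancel_left k hp.pos
      · intro x hx
        simp only [Finset.mem_filter, Finset.mem_univ, true_and] at hx
        show e x = (2 : F) ^ (p * (x.val / p))
        simp only [he_def]
        rw [Nat.mul_div_cancel' hx]
    rw [hA, hB]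
  -- the sign computation
  have hsign : (quadraticChar (ZMod p) (-1) : ℤ)
      * (quadraticChar (ZMod (p + 2)) (-1) : ℤ) = -1 := by
    have e1 : (quadraticChar (ZMod p) (-1) : ℤ) = legendreSym p (-1) := by
      show _ = quadraticChar (ZMod p) ((-1 : ℤ) : ZMod p)
      norm_num
    have e2 : (quadraticChar (ZMod (p + 2)) (-1) : ℤ) = legendreSym (p + 2) (-1) := by
      show _ = quadraticChar (ZMod (p + 2)) ((-1 : ℤ) : ZMod (p + 2))
      norm_num
    rw [e1, e2, legendreSym.at_neg_one hp2', legendreSym.at_neg_one hq2']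
    have h4 : p % 4 = 1 ∨ p % 4 = 3 := by omega
    rcases h4 with h4 | h4
    · rw [ZMod.χ₄_nat_one_mod_four h4, ZMod.χ₄_nat_three_mod_four (by omega)]
      ring
    · rw [ZMod.χ₄_nat_three_mod_four h4, ZMod.χ₄_nat_one_mod_four (by omega)]
      ring
  have hg1 := gauss_sq p hp2' ψ1 hψ1mul hψ10
  have hg2 := gauss_sq (p + 2) hq2' ψ2 hψ2mul hψ20
  rw [hSps1] at hg1
  rw [hSps2] at hg2
  rw [hstep1, hstep2, mul_pow, hg1, hg2]
  have hs : ((quadraticChar (ZMod p) (-1) : ℤ) : F)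
      * ((quadraticChar (ZMod (p + 2)) (-1) : ℤ) : F) = -1 := by
    rw [← Int.cast_mul, hsign]
    norm_num
  push_cast
  push_cast at hs
  linear_combination (((p : F)) - ∑ k ∈ Finset.range p, (2 : F) ^ ((p + 2) * k))
    * (((p : F) + 2) - ∑ k ∈ Finset.range (p + 2), (2 : F) ^ (p * k)) * hs

lemma divisors_of_mul_primes {p q d : ℕ} (hp : p.Prime) (hq : q.Prime)
    (hd : d ∣ p * q) : d = 1 ∨ d = p ∨ d = q ∨ d = p * q := by
  by_cases hpd : p ∣ d
  · obtain ⟨e, rfl⟩ := hpd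
    have he : e ∣ q := (Nat.mul_dvd_mul_iff_left hp.pos).mp hd
    rcases (Nat.Prime.eq_one_or_self_of_dvd hq e he) with h | h
    · right; left; rw [h, mul_one]
    · right; right; right; rw [h]
  · have hcop : Nat.Coprime d p := Nat.Coprime.symm ((Nat.Prime.coprime_iff_not_dvd hp).mpr hpd)
    have hdq : d ∣ q := hcop.dvd_of_dvd_mul_right (by rwa [mul_comm p q] at hd)
    rcases (Nat.Prime.eq_one_or_self_of_dvd hq d hdq) with h | h
    · left; exact h
    · right; right; left; exact h

lemma no_common_prime (p : ℕ) (hp : p.Prime) (hodd : Odd p) (hp2 : (p + 2).Prime)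
    (q : ℕ) (hq : q.Prime)
    (hqS : q ∣ ∑ i ∈ Finset.range (p * (p + 2)), modTwoPrimeSeq p i * 2 ^ i)
    (hqM : q ∣ 2 ^ (p * (p + 2)) - 1) : False := by
  haveI : Fact q.Prime := ⟨hq⟩
  have hpo : p % 2 = 1 := Nat.odd_iff.mp hodd
  have h3p : 3 ≤ p := by have := hp.two_le; omega
  set N := p * (p + 2) with hN
  have hNpos : 0 < N := by positivity
  have hNodd : Odd N := hodd.mul (Nat.odd_iff.mpr (by omega))
  have h2Nge : 1 ≤ 2 ^ N := Nat.one_le_two_pow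
  have h2dvd : 2 ∣ 2 ^ N := dvd_pow_self 2 hNpos.ne'
  have hqodd : q ≠ 2 := by
    rintro rfl
    omega
  have hq1 : 1 < q := hq.one_lt
  have h2N : (2 : ZMod q) ^ N = 1 := by
    have h0 : ((2 ^ N - 1 : ℕ) : ZMod q) = 0 := (ZMod.natCast_eq_zero_iff _ _).mpr hqM
    rw [Nat.cast_sub h2Nge] at h0
    push_cast at h0
    linear_combination h0
  have hS0 : ((∑ i ∈ Finset.range N, modTwoPrimeSeq p i * 2 ^ i : ℕ) : ZMod q) = 0 :=
    (ZMod.natCast_eq_zero_iff _ _).mpr hqS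
  have hI := identityI p hp hodd hp2 h2N hS0
  have hII := identityII p hp hodd hp2 h2N
  set rp := ∑ k ∈ Finset.range (p + 2), (2 : ZMod q) ^ (p * k) with hrp
  set rq := ∑ k ∈ Finset.range p, (2 : ZMod q) ^ ((p + 2) * k) with hrq
  have hrp' : rp = ∑ k ∈ Finset.range (p + 2), ((2 : ZMod q) ^ p) ^ k := by
    rw [hrp]
    exact Finset.sum_congr rfl fun k _ => (pow_mul 2 p k)
  have hrq' : rq = ∑ k ∈ Finset.range p, ((2 : ZMod q) ^ (p + 2)) ^ k := by
    rw [hrq]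
    exact Finset.sum_congr rfl fun k _ => (pow_mul 2 (p + 2) k)
  have hgp : rp * ((2 : ZMod q) ^ p - 1) = 0 := by
    rw [hrp', geom_sum_mul, ← pow_mul, ← hN, h2N, sub_self]
  have hgq : rq * ((2 : ZMod q) ^ (p + 2) - 1) = 0 := by
    rw [hrq', geom_sum_mul, ← pow_mul, show (p + 2) * p = N by rw [hN]; ring, h2N, sub_self]
  have h2ne0 : (2 : ZMod q) ≠ 0 := by
    intro h
    have h' : ((2 : ℕ) : ZMod q) = 0 := by exact_mod_cast h
    have := (ZMod.natCast_eq_zero_iff 2 q).mp h'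
    exact hqodd ((Nat.prime_dvd_prime_iff_eq hq Nat.prime_two).mp this)
  have h2ne1 : (2 : ZMod q) ≠ 1 := by
    intro h
    have h1 : ((1 : ℕ) : ZMod q) = 0 := by push_cast; linear_combination h
    have := Nat.le_of_dvd one_pos ((ZMod.natCast_eq_zero_iff 1 q).mp h1)
    omega
  have hord_dvd_N : orderOf (2 : ZMod q) ∣ N := orderOf_dvd_of_pow_eq_one h2N
  have hord_ne_one : orderOf (2 : ZMod q) ≠ 1 := by
    intro h
    exact h2ne1 (orderOf_eq_one_iff.mp h)
  have hord_dvd : orderOf (2 : ZMod q) ∣ q - 1 :=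
    orderOf_dvd_of_pow_eq_one (ZMod.pow_card_sub_one_eq_one h2ne0)
  have hqodd' : q % 2 = 1 := Nat.odd_iff.mp (hq.odd_of_ne_two hqodd)
  by_cases hA : (2 : ZMod q) ^ p = 1
  · by_cases hB : (2 : ZMod q) ^ (p + 2) = 1
    · -- both: 4 = 1, so q = 3, but 3 never divides 2^N - 1 for odd N
      have h4 : (2 : ZMod q) ^ (p + 2) = (2 : ZMod q) ^ p * 4 := by
        rw [pow_add]; norm_num
      rw [hA, hB] at h4
      have h3 : ((3 : ℕ) : ZMod q) = 0 := by push_cast; linear_combination -h4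
      have hq3 : q = 3 := (Nat.prime_dvd_prime_iff_eq hq Nat.prime_three).mp
        ((ZMod.natCast_eq_zero_iff 3 q).mp h3)
      have h3dvd : (3 : ℕ) ∣ 2 ^ N - 1 := hq3 ▸ hqM
      have hz : ((2 ^ N - 1 : ℕ) : ZMod 3) = 0 :=
        (ZMod.natCast_eq_zero_iff _ _).mpr h3dvd
      rw [Nat.cast_sub h2Nge] at hz
      push_cast at hz
      have hd2 : (2 : ZMod 3) = -1 := by decide
      rw [hd2, Odd.neg_one_pow hNodd] at hz
      have hd3 : ((-1 : ZMod 3) - 1) ≠ 0 := by decide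
      exact hd3 hz
    · -- 2^p = 1, 2^(p+2) ≠ 1
      have hrq0 : rq = 0 := by
        rcases mul_eq_zero.mp hgq with h | h
        · exact h
        · exact absurd (by linear_combination h) hB
      have hrpv : rp = ((p + 2 : ℕ) : ZMod q) := by
        rw [hrp', hA]
        simp
      have hG2 : ((p + 1 : ℕ) : ZMod q) ^ 2 = 0 := by
        rw [hI, hrq0, hrpv] at hII
        push_cast at hII ⊢
        linear_combination hII
      have hQ0 : ((p + 1 : ℕ) : ZMod q) = 0 := by
        exact pow_eq_zero_iff (two_ne_zero) |>.mp hG2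
      have hqp1 : q ∣ p + 1 := (ZMod.natCast_eq_zero_iff _ _).mp hQ0
      have hqle : q ≤ p + 1 := Nat.le_of_dvd (by omega) hqp1
      have hordp : orderOf (2 : ZMod q) ∣ p := orderOf_dvd_of_pow_eq_one hA
      have hordeq : orderOf (2 : ZMod q) = p :=
        (hp.eq_one_or_self_of_dvd _ hordp).resolve_left hord_ne_one
      have hpq1 : p ∣ q - 1 := hordeq ▸ hord_dvd
      have hple : p ≤ q - 1 := Nat.le_of_dvd (by omega) hpq1
      omega
  · by_cases hB : (2 : ZMod q) ^ (p + 2) = 1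
    · -- 2^(p+2) = 1, 2^p ≠ 1
      have hrp0 : rp = 0 := by
        rcases mul_eq_zero.mp hgp with h | h
        · exact h
        · exact absurd (by linear_combination h) hA
      have hrqv : rq = ((p : ℕ) : ZMod q) := by
        rw [hrq', hB]
        simp
      have hG2 : ((p - 1 : ℕ) : ZMod q) ^ 2 = 0 := by
        rw [hI, hrp0, hrqv] at hII
        rw [Nat.cast_sub (by omega)]
        push_cast at hII ⊢
        linear_combination hII
      have hQ0 : ((p - 1 : ℕ) : ZMod q) = 0 := pow_eq_zero_iff (two_ne_zero) |>.mp hG2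
      have hqp1 : q ∣ p - 1 := (ZMod.natCast_eq_zero_iff _ _).mp hQ0
      have hqle : q ≤ p - 1 := Nat.le_of_dvd (by omega) hqp1
      have hordp : orderOf (2 : ZMod q) ∣ p + 2 := orderOf_dvd_of_pow_eq_one hB
      have hordeq : orderOf (2 : ZMod q) = p + 2 :=
        (hp2.eq_one_or_self_of_dvd _ hordp).resolve_left hord_ne_one
      have hpq1 : p + 2 ∣ q - 1 := hordeq ▸ hord_dvd
      have hple : p + 2 ≤ q - 1 := Nat.le_of_dvd (by omega) hpq1
      omega
    · -- neither
      have hrp0 : rp = 0 := by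
        rcases mul_eq_zero.mp hgp with h | h
        · exact h
        · exact absurd (by linear_combination h) hA
      have hrq0 : rq = 0 := by
        rcases mul_eq_zero.mp hgq with h | h
        · exact h
        · exact absurd (by linear_combination h) hB
      have hG2 : ((N + 1 : ℕ) : ZMod q) = 0 := by
        rw [hI, hrp0, hrq0] at hII
        rw [hN]
        push_cast at hII ⊢
        linear_combination hII
      have hqN1 : q ∣ N + 1 := (ZMod.natCast_eq_zero_iff _ _).mp hG2
      have hsq : N + 1 = (p + 1) ^ 2 := by rw [hN]; ring
      have hqp1 : q ∣ p + 1 := hq.dvd_of_dvd_pow (n := 2) (by rw [← hsq]; exact hqN1)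
      have hqle : q ≤ p + 1 := Nat.le_of_dvd (by omega) hqp1
      have hord_ne_p : orderOf (2 : ZMod q) ≠ p := by
        intro h
        exact hA (h ▸ pow_orderOf_eq_one (2 : ZMod q))
      have hord_ne_q : orderOf (2 : ZMod q) ≠ p + 2 := by
        intro h
        exact hB (h ▸ pow_orderOf_eq_one (2 : ZMod q))
      have hordN : orderOf (2 : ZMod q) = N := by
        rcases divisors_of_mul_primes hp hp2 (hN ▸ hord_dvd_N) with h | h | h | h
        · exact absurd h hord_ne_one
        · exact absurd h hord_ne_p
        · exact absurd h hord_ne_q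
        · rw [h, hN]
      have hNq1 : N ∣ q - 1 := hordN ▸ hord_dvd
      have hNle : N ≤ q - 1 := Nat.le_of_dvd (by omega) hNq1
      have : 3 * p ≤ N := by
        rw [hN]
        nlinarith
      omega

theorem stmt_14 (p : ℕ) (hp : p.Prime) (hodd : Odd p) (hp2 : (p + 2).Prime) :
    Nat.gcd (∑ i ∈ Finset.range (p * (p + 2)), modTwoPrimeSeq p i * 2 ^ i)
        (2 ^ (p * (p + 2)) - 1) = 1 ∧
      Real.logb 2 ((2 ^ (p * (p + 2)) - 1 : ℝ) /
          (Nat.gcd (∑ i ∈ Finset.range (p * (p + 2)), modTwoPrimeSeq p i * 2 ^ i)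
            (2 ^ (p * (p + 2)) - 1) : ℝ)) =
        Real.logb 2 ((2 : ℝ) ^ (p * (p + 2)) - 1) := by
  have hgcd : Nat.gcd (∑ i ∈ Finset.range (p * (p + 2)), modTwoPrimeSeq p i * 2 ^ i)
      (2 ^ (p * (p + 2)) - 1) = 1 := by
    by_contra hne
    have hqp : (Nat.gcd (∑ i ∈ Finset.range (p * (p + 2)), modTwoPrimeSeq p i * 2 ^ i)
        (2 ^ (p * (p + 2)) - 1)).minFac.Prime := Nat.minFac_prime hne
    have hq_dvd := Nat.minFac_dvd (Nat.gcd (∑ i ∈ Finset.range (p * (p + 2)),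
        modTwoPrimeSeq p i * 2 ^ i) (2 ^ (p * (p + 2)) - 1))
    exact no_common_prime p hp hodd hp2 _ hqp
      (hq_dvd.trans (Nat.gcd_dvd_left _ _)) (hq_dvd.trans (Nat.gcd_dvd_right _ _))
  refine ⟨hgcd, ?_⟩
  rw [hgcd, Nat.cast_one, div_one]
end
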